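/- Suppose a bounded holomorphic function f on the right half-plane H has asymptotic expansion ∑_{j=0}^∞ c_j e^{-λ_j z}, and suppose ∑_{j=0}^∞ e^{-λ_j d} < ∞ for some d > 0. Then the series ∑_{j=0}^∞ c_j e^{-λ_j z} converges uniformly to f(z) on H_d = {z : Re z ≥ d}. -/

import Mathlib

/-!
Write `S_N` for the partial sums of the expansion and `C` for a bound of `f`. On a line
`re z = R`, the mean of `S_N(z) e^{λ_N z}` over longer and longer vertical segments tends to
`c N`, because every other term oscillates with a nonzero frequency; for large `R` this mean is
within `ε` of the mean of `f(z) e^{λ_N z}`. By Cauchy's theorem on rectangles the latter may be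
moved to any line `re z = σ > 0`, where it is at most `C e^{λ_N σ}`. Letting `ε, σ → 0` gives
`‖c N‖ ≤ C`.

So on `re z ≥ d` the series is dominated by `C ∑ e^{-λ_j d}`: it converges uniformly to a
bounded function `g`, holomorphic on `re z > d`, with the same asymptotic expansion as `f`.
Then `f - g` decays faster than every `e^{-λ_N x}` along the real axis, and the
Phragmén–Lindelöf principle on the half-plane `re z > d` forces `f = g` there.
-/

open Filter Complex Set Topology

/-- `∑_j c j e^{-lam j z}` is an asymptotic expansion of `f` on the right half-plane,
for a strictly increasing sequence of levels `0 = lam 0 < lam 1 < ⋯ → ∞`. -/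
def HasHolAsymExp (f : ℂ → ℂ) (lam : ℕ → ℝ) (c : ℕ → ℂ) : Prop :=
  lam 0 = 0 ∧ StrictMono lam ∧ Filter.Tendsto lam Filter.atTop Filter.atTop ∧
    ∀ N : ℕ, Filter.Tendsto
      (fun z : ℂ => ‖
          (f z - ∑ j ∈ Finset.range (N + 1), c j * Complex.exp (-(lam j : ℂ) * z))‖ *
        Real.exp (lam N * z.re))
      (Filter.comap Complex.re Filter.atTop) (nhds 0)

noncomputable def verticalMean (g : ℂ → ℂ) (x T : ℝ) : ℂ :=
  (2 * T)⁻¹ • ∫ t in -T..T, g (x + t * I)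

section VerticalMean

variable {g h : ℂ → ℂ} {x T M : ℝ}

lemma norm_verticalMean_le (hT : 0 < T) (hM : ∀ t : ℝ, ‖g (x + t * I)‖ ≤ M) :
    ‖verticalMean g x T‖ ≤ M := by
  have h2T : 0 < 2 * T := by positivity
  rw [verticalMean, norm_smul, Real.norm_of_nonneg (inv_pos.2 h2T).le, inv_mul_le_iff₀ h2T]
  calc ‖∫ t in -T..T, g (x + t * I)‖ ≤ M * |T - -T| :=
        intervalIntegral.norm_integral_le_of_norm_le_const fun t _ => hM t
    _ = 2 * T * M := by rw [sub_neg_eq_add, abs_of_pos (by linarith)]; ring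

lemma verticalMean_sub (hg : Continuous fun t : ℝ => g (x + t * I))
    (hh : Continuous fun t : ℝ => h (x + t * I)) :
    verticalMean (fun z => g z - h z) x T = verticalMean g x T - verticalMean h x T := by
  rw [verticalMean, intervalIntegral.integral_sub (hg.intervalIntegrable _ _)
    (hh.intervalIntegrable _ _), smul_sub, verticalMean, verticalMean]

lemma verticalMean_sum {ι : Type*} (s : Finset ι) (g : ι → ℂ → ℂ)
    (hg : ∀ i ∈ s, Continuous fun t : ℝ => g i (x + t * I)) :
    verticalMean (fun z => ∑ i ∈ s, g i z) x T = ∑ i ∈ s, verticalMean (g i) x T := by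
  rw [verticalMean,
    intervalIntegral.integral_finsetSum fun i hi => (hg i hi).intervalIntegrable _ _,
    Finset.smul_sum]
  rfl

lemma tendsto_verticalMean_const_mul_exp (a : ℂ) (μ x : ℝ) :
    Tendsto (fun T => verticalMean (fun z => a * exp (μ * z)) x T) atTop
      (𝓝 (if μ = 0 then a else 0)) := by
  split_ifs with hμ
  · refine tendsto_const_nhds.congr' ?_
    filter_upwards [eventually_gt_atTop 0] with T hT
    simp only [verticalMean, hμ, ofReal_zero, zero_mul, exp_zero, mul_one,
      intervalIntegral.integral_const, smul_smul]
    rw [sub_neg_eq_add, ← two_mul, inv_mul_cancel₀ (by positivity), one_smul]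
  · have hμI : (μ : ℂ) * I ≠ 0 := mul_ne_zero (ofReal_ne_zero.2 hμ) I_ne_zero
    refine squeeze_zero_norm' ?_
      ((tendsto_const_nhds (x := ‖a‖ * Real.exp (μ * x) / |μ|)).div_atTop tendsto_id)
    filter_upwards [eventually_gt_atTop 0] with T hT
    have hsplit : ∀ t : ℝ, a * exp (μ * (x + t * I)) = a * exp (μ * x) * exp (μ * I * t) := by
      intro t
      rw [mul_assoc, ← exp_add]
      ring_nf
    have hexp : ∀ s : ℝ, ‖exp (μ * I * s)‖ = 1 := fun s => by
      rw [norm_exp]; simp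
    have hint : ‖∫ t in -T..T, exp (μ * I * t)‖ ≤ 2 / |μ| := by
      rw [integral_exp_mul_complex hμI, norm_div, norm_mul, norm_I, mul_one, norm_real,
        Real.norm_eq_abs]
      gcongr
      calc _ ≤ ‖exp (μ * I * T)‖ + ‖exp (μ * I * ↑(-T))‖ := norm_sub_le _ _
        _ = 2 := by rw [hexp, hexp]; norm_num
    simp only [verticalMean, hsplit, intervalIntegral.integral_const_mul]
    rw [norm_smul, norm_mul, norm_mul, norm_exp, ← ofReal_mul, ofReal_re,
      Real.norm_of_nonneg (by positivity)]
    calc (2 * T)⁻¹ * (‖a‖ * Real.exp (μ * x) * ‖∫ t in -T..T, exp (μ * I * t)‖)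
        ≤ (2 * T)⁻¹ * (‖a‖ * Real.exp (μ * x) * (2 / |μ|)) := by gcongr
      _ = ‖a‖ * Real.exp (μ * x) / |μ| / id T := by simp only [id]; field_simp

lemma tendsto_verticalMean_sub_verticalMean {σ R : ℝ} (hσR : σ ≤ R)
    (hh : DifferentiableOn ℂ h (re ⁻¹' Icc σ R)) (hM : ∀ z ∈ re ⁻¹' Icc σ R, ‖h z‖ ≤ M) :
    Tendsto (fun T => verticalMean h R T - verticalMean h σ T) atTop (𝓝 0) := by
  have hhor : ∀ y : ℝ, ‖∫ x in σ..R, h (x + y * I)‖ ≤ M * (R - σ) := fun y => by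
    refine (intervalIntegral.norm_integral_le_of_norm_le_const fun x hx => hM _ ?_).trans_eq
      (by rw [abs_of_nonneg (sub_nonneg.2 hσR)])
    rw [uIoc_of_le hσR] at hx
    simpa using ⟨hx.1.le, hx.2⟩
  refine squeeze_zero_norm' ?_ ((tendsto_const_nhds (x := M * (R - σ))).div_atTop tendsto_id)
  filter_upwards [eventually_gt_atTop 0] with T hT
  have hrect := integral_boundary_rect_eq_zero_of_differentiableOn h
    (σ + ((-T : ℝ) : ℂ) * I) (R + T * I)
    (hh.mono fun z hz => by simpa [mem_reProdIm, uIcc_of_le hσR] using hz.1)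
  simp only [add_re, ofReal_re, mul_re, I_re, mul_zero, ofReal_im, I_im, mul_one, sub_self,
    add_zero, add_im, mul_im, zero_add, smul_eq_mul] at hrect
  have hvert : I * ((∫ t in -T..T, h (R + t * I)) - ∫ t in -T..T, h (σ + t * I)) =
      (∫ x in σ..R, h (x + T * I)) - ∫ x in σ..R, h (x + ↑(-T) * I) := by
    linear_combination hrect
  rw [verticalMean, verticalMean, ← smul_sub, norm_smul, Real.norm_of_nonneg (by positivity),
    ← one_mul ‖_ - _‖, ← norm_I, ← norm_mul, hvert, id, inv_mul_le_iff₀ (by positivity)]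
  calc _ ≤ ‖∫ x in σ..R, h (x + T * I)‖ + ‖∫ x in σ..R, h (x + ↑(-T) * I)‖ := norm_sub_le _ _
    _ ≤ M * (R - σ) + M * (R - σ) := add_le_add (hhor _) (hhor _)
    _ = 2 * T * (M * (R - σ) / T) := by field_simp; ring

end VerticalMean

lemma tendsto_verticalMean_sum_mul_exp {lam : ℕ → ℝ} (hlam : Function.Injective lam) (c : ℕ → ℂ)
    (N : ℕ) (x : ℝ) :
    Tendsto (fun T => verticalMean (fun z =>
      (∑ j ∈ Finset.range (N + 1), c j * exp (-(lam j : ℂ) * z)) * exp (lam N * z)) x T)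
      atTop (𝓝 (c N)) := by
  have hterm : ∀ z : ℂ, (∑ j ∈ Finset.range (N + 1), c j * exp (-(lam j : ℂ) * z)) *
      exp (lam N * z) = ∑ j ∈ Finset.range (N + 1), c j * exp ((lam N - lam j : ℝ) * z) := by
    intro z
    rw [Finset.sum_mul]
    refine Finset.sum_congr rfl fun j _ => ?_
    rw [mul_assoc, ← exp_add]
    push_cast
    ring_nf
  have hmean : ∀ T, verticalMean
      (fun z => ∑ j ∈ Finset.range (N + 1), c j * exp ((lam N - lam j : ℝ) * z)) x T =
      ∑ j ∈ Finset.range (N + 1), verticalMean (fun z => c j * exp ((lam N - lam j : ℝ) * z)) x T :=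
    fun T => verticalMean_sum _ _ fun j _ => by fun_prop
  simp only [hterm, hmean]
  convert tendsto_finsetSum _ fun j _ => tendsto_verticalMean_const_mul_exp (c j) (lam N - lam j) x
  simp [sub_eq_zero, hlam.eq_iff, eq_comm (a := N)]

lemma norm_coeff_le_mul_exp_add {f : ℂ → ℂ} {lam : ℕ → ℝ} {c : ℕ → ℂ}
    (hlam : Function.Injective lam) (hf : DifferentiableOn ℂ f {z | 0 < z.re}) {C : ℝ}
    (hC : ∀ z : ℂ, 0 < z.re → ‖f z‖ ≤ C)
    {N : ℕ} (hN : 0 ≤ lam N) {σ R ε : ℝ} (hσ : 0 < σ) (hσR : σ ≤ R)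
    (hR : ∀ t : ℝ, ‖f (R + t * I) - ∑ j ∈ Finset.range (N + 1),
      c j * exp (-(lam j : ℂ) * (R + t * I))‖ * Real.exp (lam N * R) ≤ ε) :
    ‖c N‖ ≤ C * Real.exp (lam N * σ) + ε := by
  set h : ℂ → ℂ := fun z => f z * exp (lam N * z)
  set p : ℂ → ℂ := fun z => (∑ j ∈ Finset.range (N + 1), c j * exp (-(lam j : ℂ) * z)) *
    exp (lam N * z)
  have hnorm_h : ∀ z : ℂ, 0 < z.re → ‖h z‖ ≤ C * Real.exp (lam N * z.re) := fun z hz => by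
    simp only [h, norm_mul, norm_exp, re_ofReal_mul]
    exact mul_le_mul_of_nonneg_right (hC z hz) (Real.exp_pos _).le
  have hdiff : DifferentiableOn ℂ h {z | 0 < z.re} := hf.mul (by fun_prop)
  -- Cauchy's theorem moves the mean of `h` from the line `re z = R` to the line `re z = σ`.
  have hcauchy := tendsto_verticalMean_sub_verticalMean (M := C * Real.exp (lam N * R)) hσR
    (hdiff.mono fun z hz => hσ.trans_le hz.1) fun z hz => (hnorm_h z (hσ.trans_le hz.1)).trans
      (by gcongr; exacts [(norm_nonneg _).trans (hC 1 one_pos), hz.2])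
  refine le_of_tendsto_of_tendsto (tendsto_verticalMean_sum_mul_exp hlam c N R).norm
    (((hcauchy.norm.const_add ε).add_const (C * Real.exp (lam N * σ))).trans_eq
      (by rw [norm_zero, add_zero, add_comm]))
    (eventually_gt_atTop 0 |>.mono fun T hT => ?_)
  have hRline : ‖verticalMean (fun z => p z - h z) R T‖ ≤ ε := by
    refine norm_verticalMean_le hT fun t => le_of_eq_of_le ?_ (hR t)
    rw [← sub_mul, norm_mul, norm_exp, re_ofReal_mul, norm_sub_rev]
    simp
  have hσline : ‖verticalMean h σ T‖ ≤ C * Real.exp (lam N * σ) :=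
    norm_verticalMean_le hT fun t => by simpa using hnorm_h (σ + t * I) (by simpa using hσ)
  have hcont : Continuous fun t : ℝ => h (R + t * I) :=
    hdiff.continuousOn.comp_continuous (by fun_prop) fun t => by simpa using hσ.trans_le hσR
  rw [verticalMean_sub (by fun_prop) hcont] at hRline
  calc ‖verticalMean p R T‖ = ‖(verticalMean p R T - verticalMean h R T) +
        (verticalMean h R T - verticalMean h σ T) + verticalMean h σ T‖ := by ring_nf
    _ ≤ _ := norm_add₃_le.trans (add_le_add_three hRline le_rfl hσline)

namespace HasHolAsymExp

variable {f : ℂ → ℂ} {lam : ℕ → ℝ} {c : ℕ → ℂ}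

lemma nonneg (hae : HasHolAsymExp f lam c) (j : ℕ) : 0 ≤ lam j :=
  hae.1 ▸ hae.2.1.monotone j.zero_le

lemma norm_coeff_le_mul_exp (hae : HasHolAsymExp f lam c)
    (hf : DifferentiableOn ℂ f {z | 0 < z.re}) {C : ℝ} (hC : ∀ z : ℂ, 0 < z.re → ‖f z‖ ≤ C)
    (N : ℕ) {σ : ℝ} (hσ : 0 < σ) : ‖c N‖ ≤ C * Real.exp (lam N * σ) := by
  refine le_of_forall_pos_le_add fun ε hε => ?_
  obtain ⟨R, hR⟩ := eventually_atTop.1 (eventually_comap.1 ((hae.2.2.2 N).eventually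
    (ge_mem_nhds hε)))
  refine norm_coeff_le_mul_exp_add hae.2.1.injective hf hC (hae.nonneg N) hσ (le_max_right R σ)
    fun t => ?_
  simpa using hR (max R σ) (le_max_left R σ) (max R σ + t * I) (by simp)

lemma norm_coeff_le (hae : HasHolAsymExp f lam c) (hf : DifferentiableOn ℂ f {z | 0 < z.re})
    {C : ℝ} (hC : ∀ z : ℂ, 0 < z.re → ‖f z‖ ≤ C) (N : ℕ) : ‖c N‖ ≤ C := by
  have hlim : Tendsto (fun σ => C * Real.exp (lam N * σ)) (𝓝[>] 0) (𝓝 C) := by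
    exact ((by fun_prop : Continuous fun σ => C * Real.exp (lam N * σ)).tendsto' 0 C
      (by simp)).mono_left nhdsWithin_le_nhds
  exact ge_of_tendsto hlim (eventually_mem_nhdsWithin.mono fun σ hσ =>
    hae.norm_coeff_le_mul_exp hf hC N hσ)

end HasHolAsymExp

lemma norm_mul_exp_le {a : ℂ} {C μ μ' d : ℝ} {z : ℂ} (ha : ‖a‖ ≤ C) (hμ : μ' ≤ μ)
    (hz : d ≤ z.re) :
    ‖a * exp (-(μ : ℂ) * z)‖ ≤ C * Real.exp (-μ' * (z.re - d)) * Real.exp (-μ * d) := by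
  rw [norm_mul, norm_exp, ← ofReal_neg, re_ofReal_mul, mul_assoc, ← Real.exp_add]
  exact mul_le_mul ha (Real.exp_le_exp.2 (by nlinarith)) (Real.exp_pos _).le
    ((norm_nonneg _).trans ha)

section DirichletSeries

variable {lam : ℕ → ℝ} {c : ℕ → ℂ} {C d : ℝ}

lemma norm_coeff_mul_exp_le (hlam : ∀ j, 0 ≤ lam j) (hc : ∀ j, ‖c j‖ ≤ C) (j : ℕ) {z : ℂ}
    (hz : d ≤ z.re) : ‖c j * exp (-(lam j : ℂ) * z)‖ ≤ C * Real.exp (-lam j * d) := by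
  simpa using norm_mul_exp_le (μ' := 0) (hc j) (hlam j) hz

lemma norm_tsum_sub_sum_range_le (hlam : Monotone lam) (hlam0 : ∀ j, 0 ≤ lam j)
    (hc : ∀ j, ‖c j‖ ≤ C) (hsum : Summable fun j => Real.exp (-lam j * d)) (M : ℕ) {z : ℂ}
    (hz : d ≤ z.re) :
    ‖(∑' j, c j * exp (-(lam j : ℂ) * z)) - ∑ j ∈ Finset.range M, c j * exp (-(lam j : ℂ) * z)‖
      ≤ C * Real.exp (-lam M * (z.re - d)) * ∑' j, Real.exp (-lam (j + M) * d) := by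
  have hs : Summable fun j => c j * exp (-(lam j : ℂ) * z) :=
    (hsum.mul_left C).of_norm_bounded fun j => norm_coeff_mul_exp_le hlam0 hc j hz
  rw [← hs.sum_add_tsum_nat_add M, add_sub_cancel_left, ← tsum_mul_left]
  exact tsum_of_norm_bounded (((summable_nat_add_iff M).2 hsum).mul_left _).hasSum
    fun j => norm_mul_exp_le (hc _) (hlam (Nat.le_add_left M j)) hz

lemma tendstoUniformlyOn_sum_range_tsum (hlam : ∀ j, 0 ≤ lam j) (hc : ∀ j, ‖c j‖ ≤ C)
    (hsum : Summable fun j => Real.exp (-lam j * d)) :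
    TendstoUniformlyOn (fun N z => ∑ j ∈ Finset.range (N + 1), c j * exp (-(lam j : ℂ) * z))
      (fun z => ∑' j, c j * exp (-(lam j : ℂ) * z)) atTop {z | d ≤ z.re} := fun u hu =>
  (tendsto_add_atTop_nat 1).eventually
    (tendstoUniformlyOn_tsum_nat (f := fun j z => c j * exp (-(lam j : ℂ) * z))
      (hsum.mul_left C) (fun j _ hz => norm_coeff_mul_exp_le hlam hc j hz) u hu)

lemma diffContOnCl_tsum (hlam : ∀ j, 0 ≤ lam j) (hc : ∀ j, ‖c j‖ ≤ C)
    (hsum : Summable fun j => Real.exp (-lam j * d)) :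
    DiffContOnCl ℂ (fun z => ∑' j, c j * exp (-(lam j : ℂ) * z)) {z | d < z.re} := by
  refine ⟨differentiableOn_tsum_of_summable_norm (hsum.mul_left C) (fun j => by fun_prop)
    (isOpen_lt continuous_const continuous_re)
    fun j z hz => norm_coeff_mul_exp_le hlam hc j hz.le, ?_⟩
  rw [closure_setOfPred_lt_re]
  exact continuousOn_tsum (fun j => by fun_prop) (hsum.mul_left C)
    fun j z hz => norm_coeff_mul_exp_le hlam hc j hz

lemma tendsto_exp_neg_mul_re {a : ℝ} (ha : 0 < a) :
    Tendsto (fun z : ℂ => Real.exp (-(a * z.re))) (comap re atTop) (𝓝 0) :=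
  Real.tendsto_exp_atBot.comp (tendsto_neg_atTop_atBot.comp (tendsto_comap.const_mul_atTop ha))

lemma HasHolAsymExp.hasHolAsymExp_tsum {f : ℂ → ℂ} (hae : HasHolAsymExp f lam c)
    (hc : ∀ j, ‖c j‖ ≤ C) (hsum : Summable fun j => Real.exp (-lam j * d)) :
    HasHolAsymExp (fun z => ∑' j, c j * exp (-(lam j : ℂ) * z)) lam c := by
  have hnn := hae.nonneg
  obtain ⟨hlam0, hmono, hlim, -⟩ := hae
  refine ⟨hlam0, hmono, hlim, fun M => ?_⟩
  set K := C * (∑' j, Real.exp (-lam (j + (M + 1)) * d)) * Real.exp (lam (M + 1) * d)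
  have hgap : 0 < lam (M + 1) - lam M := sub_pos.2 (hmono M.lt_succ_self)
  refine squeeze_zero' (Eventually.of_forall fun z => by positivity) ?_
    (by simpa using (tendsto_exp_neg_mul_re hgap).const_mul K)
  filter_upwards [tendsto_comap.eventually_ge_atTop d] with z hz
  calc _ ≤ C * Real.exp (-lam (M + 1) * (z.re - d)) * (∑' j, Real.exp (-lam (j + (M + 1)) * d)) *
        Real.exp (lam M * z.re) := by
        gcongr
        exact norm_tsum_sub_sum_range_le hmono.monotone hnn hc hsum (M + 1) hz
    _ = K * Real.exp (-((lam (M + 1) - lam M) * z.re)) := by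
        have hexp : Real.exp (-lam (M + 1) * (z.re - d)) * Real.exp (lam M * z.re) =
            Real.exp (lam (M + 1) * d) * Real.exp (-((lam (M + 1) - lam M) * z.re)) := by
          rw [← Real.exp_add, ← Real.exp_add]
          ring_nf
        linear_combination (C * ∑' j, Real.exp (-lam (j + (M + 1)) * d)) * hexp

end DirichletSeries

lemma superpolynomialDecay_exp_of_tendsto {φ : ℝ → ℝ} {lam : ℕ → ℝ}
    (hlam : Tendsto lam atTop atTop)
    (h : ∀ M, Tendsto (fun x => φ x * Real.exp (lam M * x)) atTop (𝓝 0)) :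
    Asymptotics.SuperpolynomialDecay atTop Real.exp φ := by
  intro n
  obtain ⟨M, hM⟩ := (hlam.eventually_ge_atTop n).exists
  refine squeeze_zero_norm' ?_ (tendsto_zero_iff_norm_tendsto_zero.1 (h M))
  filter_upwards [eventually_ge_atTop 0] with x hx
  rw [← Real.exp_nat_mul, norm_mul, norm_mul, mul_comm, Real.norm_of_nonneg (Real.exp_pos _).le,
    Real.norm_of_nonneg (Real.exp_pos _).le]
  gcongr

lemma exists_isBigO_exp_of_bounded {E : Type*} [NormedAddCommGroup E] {F : ℂ → E} {C : ℝ}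
    (hF : ∀ z : ℂ, 0 < z.re → ‖F z‖ ≤ C) :
    ∃ a < (2 : ℝ), ∃ B, F =O[Bornology.cobounded ℂ ⊓ 𝓟 {z | 0 < z.re}]
      fun z => Real.exp (B * ‖z‖ ^ a) :=
  ⟨0, two_pos, 0, Asymptotics.IsBigO.of_bound C
    (eventually_inf_principal.2 (Eventually.of_forall fun z hz => by simpa using hF z hz))⟩

theorem HasHolAsymExp.eqOn {f g : ℂ → ℂ} {lam : ℕ → ℝ} {c : ℕ → ℂ} {d Cf Cg : ℝ}
    (hf : HasHolAsymExp f lam c) (hg : HasHolAsymExp g lam c)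
    (hfd : DiffContOnCl ℂ f {z | d < z.re}) (hgd : DiffContOnCl ℂ g {z | d < z.re})
    (hfb : ∀ z : ℂ, d ≤ z.re → ‖f z‖ ≤ Cf) (hgb : ∀ z : ℂ, d ≤ z.re → ‖g z‖ ≤ Cg) :
    EqOn f g {z | d ≤ z.re} := by
  obtain ⟨-, -, hlim, hftail⟩ := hf
  obtain ⟨-, -, -, hgtail⟩ := hg
  have hdecay : ∀ M, Tendsto (fun z => ‖f z - g z‖ * Real.exp (lam M * z.re))
      (comap re atTop) (𝓝 0) := fun M => by
    have hsum := (hftail M).add (hgtail M)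
    rw [add_zero] at hsum
    refine squeeze_zero (fun z => by positivity) (fun z => ?_) hsum
    rw [← add_mul, norm_sub_rev (g z)]
    gcongr
    exact norm_sub_le_norm_sub_add_norm_sub _ _ _
  have hshift : Tendsto (fun x : ℝ => (x : ℂ) + d) atTop (comap re atTop) :=
    tendsto_comap_iff.2 (by
      simpa [Function.comp_def] using tendsto_atTop_add_const_right _ d tendsto_id)
  have hdecay' : ∀ M, Tendsto (fun x : ℝ => ‖f (x + d) - g (x + d)‖ * Real.exp (lam M * x))
      atTop (𝓝 0) := fun M => by
    have h := ((hdecay M).comp hshift).mul_const (Real.exp (-(lam M * d)))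
    rw [zero_mul] at h
    refine h.congr fun x => ?_
    simp only [Function.comp, add_re, ofReal_re, mul_assoc, ← Real.exp_add]
    ring_nf
  have hmaps : MapsTo (fun z : ℂ => z + d) {z | 0 < z.re} {z | d < z.re} := fun z hz => by
    simpa using hz
  have key := PhragmenLindelof.eqOn_right_half_plane_of_superexponential_decay
    (hfd.comp (differentiable_id.add_const _).diffContOnCl hmaps)
    (hgd.comp (differentiable_id.add_const _).diffContOnCl hmaps)
    (exists_isBigO_exp_of_bounded fun z hz => hfb _ (by simpa using hz.le))
    (exists_isBigO_exp_of_bounded fun z hz => hgb _ (by simpa using hz.le))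
    (superpolynomialDecay_exp_of_tendsto hlim hdecay')
    ⟨Cf, fun x => hfb _ (by simp)⟩ ⟨Cg, fun x => hgb _ (by simp)⟩
  intro z hz
  simpa using key (show 0 ≤ (z - d).re by simpa using hz)

/-- **Uniform convergence of an asymptotic expansion.** If a bounded holomorphic
function `f` on the right half-plane has an asymptotic expansion `∑ c j e^{-lam j z}`
and `∑ e^{-lam j d} < ∞` for some `d > 0`, then the series `∑ c j e^{-lam j z}`
converges uniformly to `f` on `H_d = {Re z ≥ d}`. -/
theorem stmt_8 (f : ℂ → ℂ) (lam : ℕ → ℝ) (c : ℕ → ℂ) (d : ℝ)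
    (hf : DifferentiableOn ℂ f {z : ℂ | 0 < z.re})
    (hbdd : ∃ C : ℝ, ∀ z : ℂ, 0 < z.re → ‖f z‖ ≤ C)
    (hae : HasHolAsymExp f lam c)
    (hd : 0 < d)
    (hsum : Summable (fun j => Real.exp (-lam j * d))) :
    TendstoUniformlyOn
      (fun N : ℕ => fun z : ℂ => ∑ j ∈ Finset.range (N + 1), c j * Complex.exp (-(lam j : ℂ) * z))
      f Filter.atTop {z : ℂ | d ≤ z.re} := by
  obtain ⟨C, hC⟩ := hbdd
  have hc : ∀ j, ‖c j‖ ≤ C := hae.norm_coeff_le hf hC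
  have hfd : DiffContOnCl ℂ f {z | d < z.re} :=
    (hf.mono (by simpa using fun (z : ℂ) (hz : d ≤ z.re) => hd.trans_le hz)).diffContOnCl
  have heq := hae.eqOn (hae.hasHolAsymExp_tsum hc hsum) hfd (diffContOnCl_tsum hae.nonneg hc hsum)
    (fun z hz => hC z (hd.trans_le hz)) fun z hz => tsum_of_norm_bounded
      (hsum.mul_left C).hasSum fun j => norm_coeff_mul_exp_le hae.nonneg hc j hz
  exact (tendstoUniformlyOn_sum_range_tsum hae.nonneg hc hsum).congr_right heq.symm
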